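/- arXiv:1203.2662 — 3 statements merged into one kernel-verified Lean document; each statement's English description precedes it below -/
import Mathlib

section
/- Let η be a nondegenerate alternating bilinear map on V with values in V' and ρ the induced semiform on Y = V' × V. Suppose L₁ is an affine line in Y whose all pairs of points are ≈-related (an isotropic line) and every affine line parallel to L₁ is also isotropic. Then L₁ has direction vector zero (contradiction); equivalently, for every isotropic line L₁ there exists a parallel affine line L₂ that is not isotropic. -/
/-!
Isotropy of the line `p + F d` already forces `ρ(p, p + d) = η(p₂, d₂) + d₁` to vanish. This
pins `d₁ = -η(p₂, d₂)`, so `d ≠ 0` gives `d₂ ≠ 0`. Moving the base point by `(0, y)` changes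
`ρ(q, q + d)` by `η(y, d₂)`, and nondegeneracy provides `y` making this nonzero.
-/

namespace LinearMap

variable {R V V' : Type*} [CommRing R] [AddCommGroup V] [Module R V]
  [AddCommGroup V'] [Module R V'] {η : V →ₗ[R] V →ₗ[R] V'}

variable (η) in
def semiform (p q : V' × V) : V' := η p.2 q.2 - (p.1 - q.1)

variable (η) in
def IsIsotropicLine (p d : V' × V) : Prop :=
  ∀ α β : R, semiform η (p + α • d) (p + β • d) = 0

theorem IsAlt.semiform_self_add (hη : η.IsAlt) (p d : V' × V) :
    semiform η p (p + d) = η p.2 d.2 + d.1 := by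
  simp only [semiform, Prod.fst_add, Prod.snd_add, map_add, hη.self_eq_zero, zero_add]
  abel

theorem IsIsotropicLine.semiform_self_add_eq_zero {p d : V' × V} (h : IsIsotropicLine η p d) :
    semiform η p (p + d) = 0 := by
  simpa using h 0 1

theorem IsIsotropicLine.snd_ne_zero (hη : η.IsAlt) {p d : V' × V} (h : IsIsotropicLine η p d)
    (hd : d ≠ 0) : d.2 ≠ 0 := by
  intro hd₂
  have hd₁ : d.1 = 0 := by
    simpa [hη.semiform_self_add, hd₂] using h.semiform_self_add_eq_zero
  exact hd (Prod.ext hd₁ hd₂)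

theorem IsIsotropicLine.not_isIsotropicLine_add (hη : η.IsAlt) {p d : V' × V}
    (h : IsIsotropicLine η p d) {y : V} (hy : η y d.2 ≠ 0) :
    ¬ IsIsotropicLine η (p + (0, y)) d := by
  intro h'
  have hq := h'.semiform_self_add_eq_zero
  rw [hη.semiform_self_add, Prod.snd_add, map_add, add_apply, add_right_comm,
    ← hη.semiform_self_add p d, h.semiform_self_add_eq_zero, zero_add] at hq
  exact hy hq

theorem IsIsotropicLine.exists_not_isIsotropicLine (hη : η.IsAlt)
    (hnd : ∀ u : V, u ≠ 0 → ∃ y : V, η u y ≠ 0) {p d : V' × V} (h : IsIsotropicLine η p d)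
    (hd : d ≠ 0) : ∃ q : V' × V, ¬ IsIsotropicLine η q d := by
  obtain ⟨y, hy⟩ := hnd d.2 (h.snd_ne_zero hη hd)
  exact ⟨p + (0, y), h.not_isIsotropicLine_add hη (mt hη.eq_iff.mp hy)⟩

end LinearMap

theorem stmt12_general {F V V' : Type*} [Field F] [AddCommGroup V] [Module F V]
    [AddCommGroup V'] [Module F V']
    (η : V →ₗ[F] V →ₗ[F] V') (halt : ∀ u : V, η u u = 0)
    (hnd : ∀ u : V, u ≠ 0 → ∃ y : V, η u y ≠ 0)
    (ρ : (V' × V) → (V' × V) → V')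
    (hρ : ∀ p q : V' × V, ρ p q = η p.2 q.2 - (p.1 - q.1))
    (p d : V' × V) (hd : d ≠ 0)
    (hiso : ∀ α β : F, ρ (p + α • d) (p + β • d) = 0) :
    ∃ q : V' × V, ¬ (∀ α β : F, ρ (q + α • d) (q + β • d) = 0) := by
  obtain rfl : ρ = η.semiform := funext₂ hρ
  exact LinearMap.IsIsotropicLine.exists_not_isIsotropicLine halt hnd hiso hd

theorem stmt12 {F V V' : Type*} [Field F] [AddCommGroup V] [Module F V]
    [AddCommGroup V'] [Module F V']
    (h2 : (2 : F) ≠ 0) (η : V →ₗ[F] V →ₗ[F] V') (halt : ∀ u : V, η u u = 0)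
    (hnd : ∀ u : V, u ≠ 0 → ∃ y : V, η u y ≠ 0)
    (ρ : (V' × V) → (V' × V) → V')
    (hρ : ∀ p q : V' × V, ρ p q = η p.2 q.2 - (p.1 - q.1))
    (p d : V' × V) (hd : d ≠ 0)
    (hiso : ∀ α β : F, ρ (p + α • d) (p + β • d) = 0) :
    ∃ q : V' × V, ¬ (∀ α β : F, ρ (q + α • d) (q + β • d) = 0) :=
  stmt12_general η halt hnd ρ hρ p d hd hiso
end

section
/- Let ρ be the semiform on Y = V' × V induced by an alternating bilinear map η, with isotropic lines defined by ρ vanishing on pairs of points. If L₁ ≠ L₂ are isotropic lines through a common point p, then every affine line through p contained in the affine plane spanned by L₁ and L₂ is isotropic. (Hence the incidence structure of points and isotropic lines is a Γ-space.) -/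
/-!
Along the line `p + F d` the semiform is `ρ (p + α d) (p + β d) = (β - α) (η p.2 d.2 + d.1)`,
because `η` is alternating. So the line through `p` with direction `d` is isotropic exactly when
`d` lies in the kernel of the linear map `d ↦ η p.2 d.2 + d.1`, and the isotropic directions at
`p` form a subspace.
-/

namespace LinearMap

variable {R V V' : Type*} [CommRing R] [AddCommGroup V] [Module R V]
  [AddCommGroup V'] [Module R V']

def isotropyDefect (η : V →ₗ[R] V →ₗ[R] V') (p : V' × V) : V' × V →ₗ[R] V' :=
  (η p.2).comp (snd R V' V) + fst R V' V

theorem isotropyDefect_apply (η : V →ₗ[R] V →ₗ[R] V') (p d : V' × V) :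
    η.isotropyDefect p d = η p.2 d.2 + d.1 :=
  rfl

theorem IsAlt.semiform_along_line {η : V →ₗ[R] V →ₗ[R] V'} (hη : η.IsAlt)
    (p d : V' × V) (α β : R) :
    η (p + α • d).2 (p + β • d).2 - ((p + α • d).1 - (p + β • d).1) =
      (β - α) • η.isotropyDefect p d := by
  have hdp : η d.2 p.2 = -η p.2 d.2 := (hη.neg p.2 d.2).symm
  simp only [isotropyDefect_apply, Prod.fst_add, Prod.snd_add, Prod.smul_fst, Prod.smul_snd,
    map_add, map_smul, add_apply, smul_apply, hη.self_eq_zero, hdp, smul_zero, add_zero]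
  module

end LinearMap

theorem stmt13_general {F V V' : Type*} [Field F] [AddCommGroup V] [Module F V]
    [AddCommGroup V'] [Module F V']
    (η : V →ₗ[F] V →ₗ[F] V') (halt : ∀ u : V, η u u = 0)
    (ρ : (V' × V) → (V' × V) → V')
    (hρ : ∀ p q : V' × V, ρ p q = η p.2 q.2 - (p.1 - q.1))
    (p d₁ d₂ : V' × V)
    (hiso₁ : ∀ α β : F, ρ (p + α • d₁) (p + β • d₁) = 0)
    (hiso₂ : ∀ α β : F, ρ (p + α • d₂) (p + β • d₂) = 0) :
    ∀ c₁ c₂ : F, ∀ α β : F,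
      ρ (p + α • (c₁ • d₁ + c₂ • d₂)) (p + β • (c₁ • d₁ + c₂ • d₂)) = 0 := by
  have along : ∀ (d : V' × V) (α β : F),
      ρ (p + α • d) (p + β • d) = (β - α) • η.isotropyDefect p d := fun d α β => by
    rw [hρ]; exact LinearMap.IsAlt.semiform_along_line halt p d α β
  have defect_eq_zero : ∀ d, (∀ α β : F, ρ (p + α • d) (p + β • d) = 0) →
      η.isotropyDefect p d = 0 := fun d hiso => by
    have h := hiso 0 1
    rwa [along, sub_zero, one_smul] at h
  intro c₁ c₂ α β
  rw [along, map_add, map_smul, map_smul, defect_eq_zero d₁ hiso₁, defect_eq_zero d₂ hiso₂]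
  simp

theorem stmt13 {F V V' : Type*} [Field F] [AddCommGroup V] [Module F V]
    [AddCommGroup V'] [Module F V']
    (h2 : (2 : F) ≠ 0) (η : V →ₗ[F] V →ₗ[F] V') (halt : ∀ u : V, η u u = 0)
    (ρ : (V' × V) → (V' × V) → V')
    (hρ : ∀ p q : V' × V, ρ p q = η p.2 q.2 - (p.1 - q.1))
    (p d₁ d₂ : V' × V) (hd₁ : d₁ ≠ 0) (hd₂ : d₂ ≠ 0)
    (hlines : { x : V' × V | ∃ α : F, x = p + α • d₁ } ≠
              { x : V' × V | ∃ α : F, x = p + α • d₂ })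
    (hiso₁ : ∀ α β : F, ρ (p + α • d₁) (p + β • d₁) = 0)
    (hiso₂ : ∀ α β : F, ρ (p + α • d₂) (p + β • d₂) = 0) :
    ∀ c₁ c₂ : F, ∀ α β : F,
      ρ (p + α • (c₁ • d₁ + c₂ • d₂)) (p + β • (c₁ • d₁ + c₂ • d₂)) = 0 :=
  stmt13_general η halt ρ hρ p d₁ d₂ hiso₁ hiso₂
end

section
/- Let η be a nondegenerate symplectic (alternating bilinear) form on an F-vector space V, and for points p_i = [a_i,u_i] of Y = F × V define ρ(p₁,p₂) = η(u₁,u₂) - (a₁-a₂), and the bisectors L_t(p₁,p₂) = { p : ρ(p₁,p) = ρ(p₂,p) } and L_m(p₁,p₂) = { p : ρ(p₁,p) = ρ(p,p₂) }. Then L_t(p₁,p₂) = L_t(p₁',p₂') if and only if p₂' - p₁' = γ(p₂ - p₁) for some nonzero scalar γ, and L_m(p₁,p₂) = L_m(p₁',p₂') if and only if p₁ + p₂ = p₁' + p₂'. -/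
/-!
Both bisectors are level sets of linear functionals on `Y = F × V`: `p ∈ L_t(p₁, p₂)` iff
`η (u₁ - u₂) u = a₁ - a₂`, and, since `η` is alternating, `p ∈ L_m(p₁, p₂)` iff
`2 a + η (u₁ + u₂) u = a₁ + a₂`. Two level sets `f = b` and `f' = b'` of linear functionals
coincide exactly when `(f', b') = γ • (f, b)` with `γ ≠ 0`, and nondegeneracy of `η` turns
proportionality of the functionals into proportionality of the vectors. For `L_m` the coefficient
`2` of `a` forces `γ = 1`.
-/

open Function

section LevelSet

variable {F M : Type*} [Field F] [AddCommGroup M] [Module F M]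

theorem exists_smul_of_preimage_singleton_eq {f f' : M →ₗ[F] F} {b b' : F} (hf : f ≠ 0)
    (h : f ⁻¹' {b} = f' ⁻¹' {b'}) : ∃ γ ≠ 0, f' = γ • f ∧ b' = γ * b := by
  obtain ⟨x, hx⟩ : ∃ x, f x ≠ 0 := by
    by_contra! hx
    exact hf (LinearMap.ext hx)
  set y := (f x)⁻¹ • x
  have hy : f y = 1 := by simp [y, hx]
  -- project `w` along `y` onto the level set `f = b`, which `f'` maps to `b'`
  have hline : ∀ w, f' w - (f w - b) * f' y = b' := by
    intro w
    have hw : w - (f w - b) • y ∈ f ⁻¹' {b} := by simp [hy]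
    rw [h] at hw
    simpa using hw
  have hb' : b' = f' y * b := by simpa [mul_comm] using (hline 0).symm
  have hf' : f' = f' y • f := by
    ext w
    have := hline w
    simp only [LinearMap.smul_apply, smul_eq_mul]
    linear_combination this + hb'
  refine ⟨f' y, fun h0 => ?_, hf', hb'⟩
  have hf'0 : f' = 0 := by rw [hf', h0, zero_smul]
  have hmem : ∀ w, w ∈ f ⁻¹' {b} := by simp [h, hf'0, hb']
  have hb0 : (0 : F) = b := by simpa using hmem 0
  have hb1 : (1 : F) = b := by simpa [hy] using hmem y
  exact one_ne_zero (hb1.trans hb0.symm)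

theorem preimage_singleton_eq_preimage_singleton_iff {f f' : M →ₗ[F] F} {b b' : F} :
    f ⁻¹' {b} = f' ⁻¹' {b'} ↔ ∃ γ ≠ 0, f' = γ • f ∧ b' = γ * b := by
  constructor
  · intro h
    by_cases hf : f = 0
    · by_cases hf' : f' = 0
      · have hbb' : b = 0 ↔ b' = 0 := by
          simpa [hf, hf', eq_comm] using Set.ext_iff.mp h 0
        by_cases hb : b = 0
        · exact ⟨1, one_ne_zero, by simp [hf, hf'], by simp [hb, hbb'.mp hb]⟩
        · refine ⟨b' / b, div_ne_zero (mt hbb'.mpr hb) hb, by simp [hf, hf'], ?_⟩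
          field_simp
      · obtain ⟨γ, hγ, hff', -⟩ := exists_smul_of_preimage_singleton_eq hf' h.symm
        exact (hf' ((smul_eq_zero.mp (hf ▸ hff').symm).resolve_left hγ)).elim
    · exact exists_smul_of_preimage_singleton_eq hf h
  · rintro ⟨γ, hγ, rfl, rfl⟩
    ext w
    simp [hγ]

end LevelSet

section Symplectic

variable {F V : Type*} [Field F] [AddCommGroup V] [Module F V] {η : V →ₗ[F] V →ₗ[F] F}

theorem injective_of_forall_ne_zero_exists (hnd : ∀ u : V, u ≠ 0 → ∃ y : V, η u y ≠ 0) :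
    Injective η := by
  refine (injective_iff_map_eq_zero η).mpr fun u hu => ?_
  by_contra hne
  obtain ⟨y, hy⟩ := hnd u hne
  simp [hu] at hy

theorem prod_eq_smul_iff_of_injective (hinj : Injective η) (d d' : F × V) (γ : F) :
    (η d'.2 = γ • η d.2 ∧ d'.1 = γ * d.1) ↔ d' = γ • d := by
  rw [← map_smul, hinj.eq_iff, Prod.ext_iff, and_comm]
  rfl

theorem setOf_eq_preimage_snd (r s : F × V) :
    {p : F × V | η r.2 p.2 - (r.1 - p.1) = η s.2 p.2 - (s.1 - p.1)}
      = Prod.snd ⁻¹' (η (r - s).2 ⁻¹' {(r - s).1}) := by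
  ext p
  simp only [Set.mem_ofPred_eq, Set.mem_preimage, Set.mem_singleton_iff, Prod.fst_sub,
    Prod.snd_sub, map_sub, LinearMap.sub_apply]
  constructor <;> intro h <;> linear_combination h

def midFunctional (η : V →ₗ[F] V →ₗ[F] F) (c : F × V) : F × V →ₗ[F] F :=
  (2 : F) • LinearMap.fst F F V + (η c.2).comp (LinearMap.snd F F V)

theorem setOf_eq_preimage_midFunctional (halt : η.IsAlt) (r s : F × V) :
    {p : F × V | η r.2 p.2 - (r.1 - p.1) = η p.2 s.2 - (p.1 - s.1)}
      = midFunctional η (r + s) ⁻¹' {(r + s).1} := by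
  ext p
  simp only [midFunctional, Set.mem_ofPred_eq, Set.mem_preimage, Set.mem_singleton_iff,
    Prod.fst_add, Prod.snd_add, map_add, LinearMap.add_apply, LinearMap.smul_apply,
    LinearMap.fst_apply, LinearMap.snd_apply, LinearMap.comp_apply, smul_eq_mul]
  rw [← halt.neg s.2 p.2]
  constructor <;> intro h <;> linear_combination h

theorem midFunctional_eq_smul_iff (h2 : (2 : F) ≠ 0) (hinj : Injective η)
    {c c' : F × V} {γ : F} :
    (midFunctional η c' = γ • midFunctional η c ∧ c'.1 = γ * c.1) ↔
      c' = c ∧ γ = 1 := by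
  constructor
  · rintro ⟨hf, h1⟩
    have hγ : γ = 1 := by
      have := LinearMap.congr_fun hf (1, 0)
      simp only [midFunctional, LinearMap.add_apply, LinearMap.smul_apply, LinearMap.fst_apply,
        LinearMap.comp_apply, LinearMap.snd_apply, map_zero, smul_eq_mul, add_zero] at this
      exact mul_right_cancel₀ h2 (by linear_combination -this)
    subst hγ
    refine ⟨Prod.ext (by simpa using h1) (hinj (LinearMap.ext fun w => ?_)), rfl⟩
    simpa [midFunctional] using LinearMap.congr_fun hf (0, w)
  · rintro ⟨rfl, rfl⟩
    simp

end Symplectic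

theorem stmt19_general {F V : Type*} [Field F] [AddCommGroup V] [Module F V]
    (h2 : (2 : F) ≠ 0) (η : V →ₗ[F] V →ₗ[F] F) (halt : ∀ u : V, η u u = 0)
    (hnd : ∀ u : V, u ≠ 0 → ∃ y : V, η u y ≠ 0)
    (ρ : (F × V) → (F × V) → F)
    (hρ : ∀ p q : F × V, ρ p q = η p.2 q.2 - (p.1 - q.1))
    (p₁ p₂ q₁ q₂ : F × V) :
    ({ p : F × V | ρ p₁ p = ρ p₂ p } = { p : F × V | ρ q₁ p = ρ q₂ p }
        ↔ ∃ γ : F, γ ≠ 0 ∧ q₂ - q₁ = γ • (p₂ - p₁)) ∧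
    ({ p : F × V | ρ p₁ p = ρ p p₂ } = { p : F × V | ρ q₁ p = ρ p q₂ }
        ↔ p₁ + p₂ = q₁ + q₂) := by
  have hinj := injective_of_forall_ne_zero_exists hnd
  simp only [hρ]
  constructor
  · rw [setOf_eq_preimage_snd, setOf_eq_preimage_snd,
      Prod.snd_surjective.preimage_injective.eq_iff, preimage_singleton_eq_preimage_singleton_iff]
    simp only [prod_eq_smul_iff_of_injective hinj, ← neg_sub p₁, ← neg_sub q₁, smul_neg,
      neg_inj]
  · rw [setOf_eq_preimage_midFunctional halt, setOf_eq_preimage_midFunctional halt,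
      preimage_singleton_eq_preimage_singleton_iff]
    simp only [midFunctional_eq_smul_iff h2 hinj]
    exact ⟨fun ⟨_, _, hc, _⟩ => hc.symm, fun hc => ⟨1, one_ne_zero, hc.symm, rfl⟩⟩

theorem stmt19 {F V : Type*} [Field F] [AddCommGroup V] [Module F V]
    (h2 : (2 : F) ≠ 0) (η : V →ₗ[F] V →ₗ[F] F) (halt : ∀ u : V, η u u = 0)
    (hnd : ∀ u : V, u ≠ 0 → ∃ y : V, η u y ≠ 0)
    (ρ : (F × V) → (F × V) → F)
    (hρ : ∀ p q : F × V, ρ p q = η p.2 q.2 - (p.1 - q.1))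
    (p₁ p₂ q₁ q₂ : F × V) (hp : p₁ ≠ p₂) (hq : q₁ ≠ q₂) :
    ({ p : F × V | ρ p₁ p = ρ p₂ p } = { p : F × V | ρ q₁ p = ρ q₂ p }
        ↔ ∃ γ : F, γ ≠ 0 ∧ q₂ - q₁ = γ • (p₂ - p₁)) ∧
    ({ p : F × V | ρ p₁ p = ρ p p₂ } = { p : F × V | ρ q₁ p = ρ p q₂ }
        ↔ p₁ + p₂ = q₁ + q₂) :=
  stmt19_general h2 η halt hnd ρ hρ p₁ p₂ q₁ q₂
end
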